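/- arXiv:1406.2399 — 2 statements merged into one kernel-verified Lean document; each statement's English description precedes it below -/
import Mathlib

section
/- Model form of the paper's main theorem (Theorem 5.1): Let μ be a nonzero Borel measure on ℝ with ∫_ℝ dμ(λ)/(1+λ²) = 1 and let M be its Herglotz transform. Fix a real number κ with 0 ≤ κ < 1. For z in the open upper half-plane, Im M(z) > 0, so M(z) + i ≠ 0 and, setting s(z) = (M(z) − i)/(M(z) + i), one has |s(z)| < 1, hence κ·s(z) − 1 ≠ 0; define the characteristic function S(z) = (s(z) − κ)/(κ·s(z) − 1), the impedance function V(z) = ((1−κ)/(1+κ))·M(z) (so that 1 − i·V(z) ≠ 0), and the transfer function W(z) = (1 − i·V(z))/(1 + i·V(z)). Then for every z with Im z > 0 one has S(z)·(1 − i·V(z)) = 1 + i·V(z); in particular, whenever 1 + i·V(z) ≠ 0, S(z)·W(z) = 1, i.e., the transfer function and the characteristic function are reciprocals of each other. -/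
/-!
For `Im z > 0` the imaginary part of the Herglotz kernel is `Im z / |t - z|²`, which is strictly
positive everywhere, so `Im M(z) > 0` as soon as `μ ≠ 0`; integrability comes from
`1/(t - z) - t/(1 + t²) = (z + (1 + z²)/(t - z)) / (1 + t²)` and `|t - z| ≥ Im z`.
The Cayley transform `s` of a point of `ℂ₊` then lies in the unit disc, and a direct computation
with `c = (1 - κ)/(1 + κ)` gives `S = (1 + i c M)/(1 - i c M)`, since
`s - κ = -(1 + κ)(1 + i c M)·i/(M + i)` and `κ s - 1 = -(1 + κ)(1 - i c M)·i/(M + i)`.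
-/

open MeasureTheory Complex

/-- The Herglotz transform of a Borel measure `μ` on `ℝ`:
`M(z) = ∫ (1/(t - z) - t/(1 + t²)) dμ(t)`. -/
noncomputable def herglotz (μ : Measure ℝ) (z : ℂ) : ℂ :=
  ∫ t : ℝ, (1 / ((t : ℂ) - z) - (t : ℂ) / (1 + (t : ℂ) ^ 2)) ∂μ

lemma im_le_norm_ofReal_sub (t : ℝ) (z : ℂ) : z.im ≤ ‖(t : ℂ) - z‖ := by
  have h := abs_im_le_norm ((t : ℂ) - z)
  rw [sub_im, ofReal_im, zero_sub, abs_neg] at h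
  exact (le_abs_self _).trans h

lemma ofReal_sub_ne_zero_of_im_pos {z : ℂ} (hz : 0 < z.im) (t : ℝ) : (t : ℂ) - z ≠ 0 := by
  intro h
  rw [← sub_eq_zero.mp h, ofReal_im] at hz
  exact hz.false

lemma one_add_ofReal_sq_ne_zero (t : ℝ) : 1 + (t : ℂ) ^ 2 ≠ 0 := by
  exact_mod_cast (by positivity : (1 + t ^ 2 : ℝ) ≠ 0)

lemma herglotz_kernel_eq {z : ℂ} {t : ℝ} (h : (t : ℂ) - z ≠ 0) :
    1 / ((t : ℂ) - z) - (t : ℂ) / (1 + (t : ℂ) ^ 2)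
      = (z + (1 + z ^ 2) / ((t : ℂ) - z)) * (1 / (1 + t ^ 2) : ℝ) := by
  have := one_add_ofReal_sq_ne_zero t
  push_cast
  field_simp
  ring

lemma norm_herglotz_kernel_le {z : ℂ} (hz : 0 < z.im) (t : ℝ) :
    ‖1 / ((t : ℂ) - z) - (t : ℂ) / (1 + (t : ℂ) ^ 2)‖
      ≤ (‖z‖ + ‖1 + z ^ 2‖ / z.im) * (1 / (1 + t ^ 2)) := by
  rw [herglotz_kernel_eq (ofReal_sub_ne_zero_of_im_pos hz t), norm_mul, norm_real,
    Real.norm_of_nonneg (by positivity)]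
  gcongr
  refine (norm_add_le _ _).trans ?_
  rw [norm_div]
  gcongr
  exact im_le_norm_ofReal_sub t z

lemma im_herglotz_kernel (z : ℂ) (t : ℝ) :
    (1 / ((t : ℂ) - z) - (t : ℂ) / (1 + (t : ℂ) ^ 2)).im = z.im / normSq ((t : ℂ) - z) := by
  have : (t : ℂ) / (1 + (t : ℂ) ^ 2) = ((t / (1 + t ^ 2) : ℝ) : ℂ) := by push_cast; rfl
  rw [this, sub_im, ofReal_im, sub_zero, one_div, inv_im]
  simp

lemma integrable_herglotz_kernel (μ : Measure ℝ)
    (hint : Integrable (fun t : ℝ => 1 / (1 + t ^ 2)) μ) {z : ℂ} (hz : 0 < z.im) :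
    Integrable (fun t : ℝ => 1 / ((t : ℂ) - z) - (t : ℂ) / (1 + (t : ℂ) ^ 2)) μ := by
  refine (hint.const_mul _).mono' ?_ (ae_of_all _ (norm_herglotz_kernel_le hz))
  refine Continuous.aestronglyMeasurable (Continuous.sub ?_ ?_)
  · exact continuous_const.div (by fun_prop) (ofReal_sub_ne_zero_of_im_pos hz)
  · exact continuous_ofReal.div (by fun_prop) one_add_ofReal_sq_ne_zero

lemma herglotz_im_pos (μ : Measure ℝ) (hμ : μ ≠ 0)
    (hint : Integrable (fun t : ℝ => 1 / (1 + t ^ 2)) μ) {z : ℂ} (hz : 0 < z.im) :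
    0 < (herglotz μ z).im := by
  have hf := integrable_herglotz_kernel μ hint hz
  have hpos (t : ℝ) : 0 < z.im / normSq ((t : ℂ) - z) :=
    div_pos hz (normSq_pos.mpr (ofReal_sub_ne_zero_of_im_pos hz t))
  have hi : Integrable (fun t : ℝ => z.im / normSq ((t : ℂ) - z)) μ := by
    simpa only [RCLike.im_eq_complex_im, im_herglotz_kernel] using hf.im
  rw [herglotz, ← RCLike.im_eq_complex_im, ← integral_im hf]
  simp only [RCLike.im_eq_complex_im, im_herglotz_kernel]
  rw [integral_pos_iff_support_of_nonneg (fun t => (hpos t).le) hi,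
    Set.eq_univ_of_forall fun t => Function.mem_support.mpr (hpos t).ne']
  exact Measure.measure_univ_pos.mpr hμ

lemma add_I_ne_zero_of_im_pos {M : ℂ} (hM : 0 < M.im) : M + I ≠ 0 := by
  intro h
  have := congrArg im h
  simp only [add_im, I_im, zero_im] at this
  linarith

lemma norm_sub_I_div_add_I_lt_one {M : ℂ} (hM : 0 < M.im) : ‖(M - I) / (M + I)‖ < 1 := by
  rw [norm_div, div_lt_one (norm_pos_iff.mpr (add_I_ne_zero_of_im_pos hM)),
    ← sq_lt_sq₀ (norm_nonneg _) (norm_nonneg _), ← normSq_eq_norm_sq, ← normSq_eq_norm_sq]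
  simp only [normSq_apply, sub_re, sub_im, add_re, add_im, I_re, I_im]
  nlinarith

lemma mul_sub_one_ne_zero_of_norm_lt_one {a s : ℂ} (ha : ‖a‖ ≤ 1) (hs : ‖s‖ < 1) :
    a * s - 1 ≠ 0 := by
  intro h
  have : ‖a * s‖ < 1 := by
    rw [norm_mul]
    nlinarith [norm_nonneg a, norm_nonneg s]
  simp [sub_eq_zero.mp h] at this

lemma one_sub_I_mul_ne_zero {V : ℂ} (hV : 0 ≤ V.im) : 1 - I * V ≠ 0 := by
  intro h
  have := congrArg re h
  simp only [sub_re, one_re, mul_re, I_re, I_im, zero_re] at this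
  linarith

lemma characteristic_mul_one_sub_I_mul_eq {M κ : ℂ} (hM : M + I ≠ 0)
    (hκs : κ * ((M - I) / (M + I)) - 1 ≠ 0) (hκ : 1 + κ ≠ 0) :
    ((M - I) / (M + I) - κ) / (κ * ((M - I) / (M + I)) - 1) * (1 - I * ((1 - κ) / (1 + κ) * M))
      = 1 + I * ((1 - κ) / (1 + κ) * M) := by
  rw [div_mul_eq_mul_div, div_eq_iff hκs]
  field_simp
  ring_nf
  simp only [I_sq]
  ring

theorem transfer_eq_reciprocal_of_characteristic_general
    (μ : Measure ℝ) (hμ : μ ≠ 0)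
    (hint : Integrable (fun t : ℝ => 1 / (1 + t ^ 2)) μ)
    (κ : ℝ) (hκ0 : 0 ≤ κ) (hκ1 : κ < 1)
    (z : ℂ) (hz : 0 < z.im) :
    let M : ℂ := herglotz μ z
    let s : ℂ := (M - I) / (M + I)
    let S : ℂ := (s - (κ : ℂ)) / ((κ : ℂ) * s - 1)
    let V : ℂ := (((1 - κ) / (1 + κ) : ℝ) : ℂ) * M
    let W : ℂ := (1 - I * V) / (1 + I * V)
    0 < M.im ∧ M + I ≠ 0 ∧ ‖s‖ < 1 ∧ (κ : ℂ) * s - 1 ≠ 0 ∧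
      1 - I * V ≠ 0 ∧ S * (1 - I * V) = 1 + I * V ∧
      (1 + I * V ≠ 0 → S * W = 1) := by
  intro M s S V W
  have hM : 0 < M.im := herglotz_im_pos μ hμ hint hz
  have hs : ‖s‖ < 1 := norm_sub_I_div_add_I_lt_one hM
  have hκs : (κ : ℂ) * s - 1 ≠ 0 :=
    mul_sub_one_ne_zero_of_norm_lt_one (by rw [norm_real, Real.norm_of_nonneg hκ0]; exact hκ1.le) hs
  have hV : 0 ≤ V.im := by
    rw [im_ofReal_mul]
    exact mul_nonneg (div_nonneg (by linarith) (by linarith)) hM.le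
  have hSV : S * (1 - I * V) = 1 + I * V := by
    have h1κ : (1 : ℂ) + κ ≠ 0 := by exact_mod_cast (by linarith : (1 + κ : ℝ) ≠ 0)
    simpa only [V, ofReal_div, ofReal_sub, ofReal_add, ofReal_one] using
      characteristic_mul_one_sub_I_mul_eq (add_I_ne_zero_of_im_pos hM) hκs h1κ
  refine ⟨hM, add_I_ne_zero_of_im_pos hM, hs, hκs, one_sub_I_mul_ne_zero hV, hSV, fun h => ?_⟩
  rw [← mul_div_assoc, hSV, div_self h]

/-- Model form of the paper's main theorem (Theorem 5.1): the transfer function and the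
characteristic function are reciprocals of each other. -/
theorem transfer_eq_reciprocal_of_characteristic
    (μ : Measure ℝ) (hμ : μ ≠ 0)
    (hint : Integrable (fun t : ℝ => 1 / (1 + t ^ 2)) μ)
    (hnorm : (∫ t : ℝ, 1 / (1 + t ^ 2) ∂μ) = 1)
    (κ : ℝ) (hκ0 : 0 ≤ κ) (hκ1 : κ < 1)
    (z : ℂ) (hz : 0 < z.im) :
    let M : ℂ := herglotz μ z
    let s : ℂ := (M - I) / (M + I)
    let S : ℂ := (s - (κ : ℂ)) / ((κ : ℂ) * s - 1)
    let V : ℂ := (((1 - κ) / (1 + κ) : ℝ) : ℂ) * M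
    let W : ℂ := (1 - I * V) / (1 + I * V)
    0 < M.im ∧ M + I ≠ 0 ∧ ‖s‖ < 1 ∧ (κ : ℂ) * s - 1 ≠ 0 ∧
      1 - I * V ≠ 0 ∧ S * (1 - I * V) = 1 + I * V ∧
      (1 + I * V ≠ 0 → S * W = 1) :=
  transfer_eq_reciprocal_of_characteristic_general μ hμ hint κ hκ0 hκ1 z hz
end

section
/- Example 1, Livšic function formula (equation (7.5)): Let ℓ > 0 be real and z ∈ ℂ with Im z > 0. Define g_z(t) = e^{−izt}, g₊(t) = (√2/√(e^{2ℓ} − 1))·e^{t}, and g₋(t) = (√2/√(1 − e^{−2ℓ}))·e^{−t}. Then ∫₀^ℓ g_z(t)·conj(g₊(t)) dt ≠ 0, the complex number 1 − e^ℓ·e^{−iℓz} is nonzero, and ((z − i)/(z + i))·( ∫₀^ℓ g_z(t)·conj(g₋(t)) dt )/( ∫₀^ℓ g_z(t)·conj(g₊(t)) dt ) = (e^ℓ − e^{−iℓz})/(1 − e^ℓ·e^{−iℓz}). -/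
/-!
Both inner products are integrals of exponentials: `g_z · conj(g_±)` is a multiple of
`exp (-i (z ± i) t)`, and `c * ∫₀^ℓ exp (c t) = exp (c ℓ) - 1` for every `c`, including `c = 0`
(the case `z = i` for `g₋`). Hence multiplying by `z ± i` removes the integrals, the
normalisations of `g₋` and `g₊` differ by the factor `e^ℓ`, and the ratio collapses to the
claimed fraction. Nonvanishing comes from `‖e^ℓ e^{-iℓz}‖ = e^{ℓ (1 + Im z)} > 1`.
-/

open Complex intervalIntegral

theorem mul_integral_exp_mul_complex (a b : ℝ) (c : ℂ) :
    c * ∫ x in a..b, exp (c * x) = exp (c * b) - exp (c * a) := by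
  rcases eq_or_ne c 0 with rfl | hc
  · simp
  · rw [integral_exp_mul_complex hc, mul_div_cancel₀ _ hc]

theorem mul_integral_exp_mul_conj_real_mul_exp (z : ℂ) (r σ ℓ : ℝ) :
    (z + σ * I) * ∫ t in (0 : ℝ)..ℓ, exp (-I * z * t) * starRingEnd ℂ (r * exp (σ * t)) =
      I * r * (exp (σ * ℓ) * exp (-I * ℓ * z) - 1) := by
  have hexp (t : ℝ) : exp (-I * z * t) * starRingEnd ℂ (r * exp (σ * t)) =
      r * exp ((σ - I * z) * t) := by
    rw [map_mul, ← exp_conj, map_mul, conj_ofReal, conj_ofReal, conj_ofReal, mul_left_comm,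
      ← exp_add]
    ring_nf
  have hc : z + σ * I = I * (σ - I * z) := by linear_combination z * I_sq
  rw [integral_congr fun t _ ↦ hexp t, integral_const_mul, hc, mul_left_comm, mul_assoc,
    mul_integral_exp_mul_complex, ← exp_add]
  simp only [ofReal_zero, mul_zero, exp_zero]
  ring_nf

theorem sqrt_exp_two_mul_sub_one (ℓ : ℝ) :
    √(Real.exp (2 * ℓ) - 1) = Real.exp ℓ * √(1 - Real.exp (-2 * ℓ)) := by
  have h : Real.exp (2 * ℓ) - 1 = Real.exp ℓ ^ 2 * (1 - Real.exp (-2 * ℓ)) := by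
    rw [← Real.exp_nat_mul, mul_sub, mul_one, ← Real.exp_add]
    norm_num
  rw [h, Real.sqrt_mul (by positivity), Real.sqrt_sq (Real.exp_pos ℓ).le]

theorem one_lt_norm_exp_mul_exp_neg_I_mul (ℓ : ℝ) (z : ℂ) (hℓ : 0 < ℓ) (hz : -1 < z.im) :
    1 < ‖exp ℓ * exp (-I * ℓ * z)‖ := by
  rw [← exp_add, norm_exp, Real.one_lt_exp_iff]
  simp only [neg_mul, add_re, ofReal_re, neg_re, mul_re, I_re, zero_mul, I_im, ofReal_im,
    mul_zero, sub_self, mul_im, one_mul, zero_add, zero_sub, neg_neg]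
  nlinarith

/-- Example 1, Livšic function formula (equation (7.5)): with the normalized deficiency
vectors `g₊`, `g₋` and deficiency element `g_z`, the Livšic function
`s(z) = ((z-i)/(z+i))·(g_z, g₋)/(g_z, g₊)` of the pair `(Ȧ, A)` equals
`(e^ℓ - e^{-iℓz})/(1 - e^ℓ e^{-iℓz})`. -/
theorem example1_livsic_function (ℓ : ℝ) (hℓ : 0 < ℓ) (z : ℂ) (hz : 0 < z.im) :
    let gz : ℝ → ℂ := fun t => Complex.exp (-I * z * (t : ℂ))
    let gp : ℝ → ℂ := fun t =>
      ((Real.sqrt 2 / Real.sqrt (Real.exp (2 * ℓ) - 1) : ℝ) : ℂ) * Complex.exp (t : ℂ)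
    let gm : ℝ → ℂ := fun t =>
      ((Real.sqrt 2 / Real.sqrt (1 - Real.exp (-2 * ℓ)) : ℝ) : ℂ) * Complex.exp (-(t : ℂ))
    (∫ t in (0 : ℝ)..ℓ, gz t * starRingEnd ℂ (gp t)) ≠ 0 ∧
      1 - Complex.exp (ℓ : ℂ) * Complex.exp (-I * (ℓ : ℂ) * z) ≠ 0 ∧
      ((z - I) / (z + I)) *
          ((∫ t in (0 : ℝ)..ℓ, gz t * starRingEnd ℂ (gm t)) /
            (∫ t in (0 : ℝ)..ℓ, gz t * starRingEnd ℂ (gp t))) =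
        (Complex.exp (ℓ : ℂ) - Complex.exp (-I * (ℓ : ℂ) * z)) /
          (1 - Complex.exp (ℓ : ℂ) * Complex.exp (-I * (ℓ : ℂ) * z)) := by
  intro gz gp gm
  have hCm : √2 / √(1 - Real.exp (-2 * ℓ)) = √2 / √(Real.exp (2 * ℓ) - 1) * Real.exp ℓ := by
    rw [sqrt_exp_two_mul_sub_one, div_mul_eq_mul_div, mul_comm √2,
      mul_div_mul_left _ _ (Real.exp_ne_zero ℓ)]
  set Cp := √2 / √(Real.exp (2 * ℓ) - 1)
  have hCp : Cp ≠ 0 :=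
    div_ne_zero (by positivity) (Real.sqrt_ne_zero'.mpr (by simp [Real.one_lt_exp_iff, hℓ]))
  have hW : exp ℓ * exp (-I * ℓ * z) ≠ 1 := fun h ↦
    (one_lt_norm_exp_mul_exp_neg_I_mul ℓ z hℓ (by linarith)).ne' (by rw [h, norm_one])
  have hp := mul_integral_exp_mul_conj_real_mul_exp z Cp 1 ℓ
  have hm := mul_integral_exp_mul_conj_real_mul_exp z (√2 / √(1 - Real.exp (-2 * ℓ))) (-1) ℓ
  simp only [ofReal_one, one_mul] at hp
  simp only [ofReal_neg, ofReal_one, neg_one_mul, ← sub_eq_add_neg] at hm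
  have hp_ne : I * Cp * (exp ℓ * exp (-I * ℓ * z) - 1) ≠ 0 :=
    mul_ne_zero (mul_ne_zero I_ne_zero (ofReal_ne_zero.mpr hCp)) (sub_ne_zero.mpr hW)
  have hIp : ∫ t in (0 : ℝ)..ℓ, gz t * starRingEnd ℂ (gp t) ≠ 0 := fun h ↦
    hp_ne (by rw [← hp, h, mul_zero])
  refine ⟨hIp, sub_ne_zero.mpr hW.symm, ?_⟩
  rw [div_mul_div_comm, hm, hp, hCm, ofReal_mul, ofReal_exp, exp_neg,
    div_eq_div_iff hp_ne (sub_ne_zero.mpr hW.symm)]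
  linear_combination (I * Cp * exp (-I * ℓ * z) * (1 - exp ℓ * exp (-I * ℓ * z))) *
    mul_inv_cancel₀ (exp_ne_zero ℓ)
end
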